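/- Consider the model y = μ + v w + u with u ~ N_T(0, σ²I_T), where μ, w ∈ ℝ^T and σ² > 0 are known, and the scalar v has prior (1−π₁)N⁺(0, τ²) + π₁δ₀ independent of u. Define η² := (w′w σ^{−2} + τ^{−2})^{−1} and ν := σ^{−2} η² w′(y − μ). Then the posterior point mass at zero is P(v = 0 | y) = π₁ / ( π₁ + 2(1−π₁)(η/τ) exp(ν²/(2η²)) Φ(ν/η) ), where Φ is the standard normal cdf, and conditional on {v > 0} the posterior distribution of v is N(ν, η²) truncated below at zero. -/

import Mathlib

open MeasureTheory ProbabilityTheory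
open scoped ENNReal BigOperators

noncomputable section

namespace BSGS

/-- Lebesgue density of the Gaussian distribution with mean `m` and variance `v`. -/
def gpdf (m v x : ℝ) : ℝ :=
  (Real.sqrt (2 * Real.pi * v))⁻¹ * Real.exp (-(x - m) ^ 2 / (2 * v))

/-- Gaussian measure on `ℝ` with mean `m` and variance `v`. -/
def gaussianM (m v : ℝ) : Measure ℝ :=
  volume.withDensity fun x => ENNReal.ofReal (gpdf m v x)

/-- The half-normal distribution `N⁺(0, τ²)` (`τ2 = τ²` is the variance parameter). -/
def halfNormal (τ2 : ℝ) : Measure ℝ :=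
  volume.withDensity fun x =>
    Set.indicator (Set.Ioi (0 : ℝ)) (fun x => ENNReal.ofReal (2 * gpdf 0 τ2 x)) x

/-- Spike-and-slab mixture `(1 - p) μ + p δ_z`. -/
def mix {E : Type*} [MeasurableSpace E] (p : ℝ) (μ : Measure E) (z : E) : Measure E :=
  ENNReal.ofReal (1 - p) • μ + ENNReal.ofReal p • Measure.dirac z

/-- Standard normal cumulative distribution function `Φ`. -/
def stdNormCDF (x : ℝ) : ℝ := ∫ t in Set.Iic x, gpdf 0 1 t

/-! On the slab `v > 0`, completing the square in `v` shows that the `N(0, τ²)` density times the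
Gaussian likelihood `L(v)` equals `L(0) (η/τ) e^{ν²/(2η²)}` times the `N(ν, η²)` density; on the
spike the likelihood is `L(0)`. Hence the unnormalised posterior is `a • N(ν, η²)|_{(0,∞)} + b • δ₀`
with `a = 2(1-π₁) L(0) (η/τ) e^{ν²/(2η²)}` and `b = π₁ L(0)`. Since `N(ν, η²)(0, ∞) = Φ(ν/η)`, the
atom carries posterior mass `b / (a Φ(ν/η) + b)`, and conditioning on `(0, ∞)` discards the
constants. -/

lemma gpdf_nonneg (m v x : ℝ) : 0 ≤ gpdf m v x := by
  unfold gpdf; positivity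

lemma gpdf_pos (m : ℝ) {v : ℝ} (hv : 0 < v) (x : ℝ) : 0 < gpdf m v x := by
  unfold gpdf; positivity

@[fun_prop]
lemma continuous_gpdf {α : Type*} [TopologicalSpace α] {m x : α → ℝ} (hm : Continuous m)
    (hx : Continuous x) (v : ℝ) : Continuous fun a => gpdf (m a) v (x a) := by
  unfold gpdf; fun_prop

lemma gaussianM_eq_gaussianReal (m : ℝ) {v : ℝ} (hv : 0 < v) :
    gaussianM m v = gaussianReal m (NNReal.mk v hv.le) := by
  rw [gaussianReal_of_var_ne_zero m (v := NNReal.mk v hv.le) (ne_of_gt hv)]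
  rfl

lemma gaussianReal_Iic_eq_ofReal_stdNormCDF (x : ℝ) :
    gaussianReal 0 1 (Set.Iic x) = ENNReal.ofReal (stdNormCDF x) :=
  gaussianReal_apply_eq_integral 0 one_ne_zero _

lemma stdNormCDF_pos (x : ℝ) : 0 < stdNormCDF x := by
  have hne : gaussianReal 0 1 (Set.Iic x) ≠ 0 := fun h => by
    simpa [Real.volume_Iic] using gaussianReal_absolutelyContinuous' 0 one_ne_zero h
  rw [gaussianReal_Iic_eq_ofReal_stdNormCDF] at hne
  simpa using hne

lemma gaussianM_Ioi_zero (m : ℝ) {v : ℝ} (hv : 0 < v) :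
    gaussianM m v (Set.Ioi 0) = ENNReal.ofReal (stdNormCDF (m / Real.sqrt v)) := by
  set s := Real.sqrt v
  have hs : 0 < s := Real.sqrt_pos.2 hv
  have hmap : (gaussianReal 0 1).map (fun x => m - s * x) = gaussianReal m (NNReal.mk v hv.le) := by
    have hcomp : (fun x => m - s * x) = (m - ·) ∘ (s * ·) := rfl
    rw [hcomp, ← Measure.map_map (by fun_prop) (by fun_prop), gaussianReal_map_const_mul,
      gaussianReal_map_const_sub]
    congr 1
    · ring
    · ext; simp [s, Real.sq_sqrt hv.le]
  have hpre : (fun x => m - s * x) ⁻¹' Set.Ioi 0 = Set.Iio (m / s) := by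
    ext x; simp [lt_div_iff₀ hs, mul_comm]
  have : NullSingletonClass (gaussianReal (0 : ℝ) 1) := nullSingletonClass_gaussianReal one_ne_zero
  rw [gaussianM_eq_gaussianReal m hv, ← hmap, Measure.map_apply (by fun_prop) measurableSet_Ioi,
    hpre, measure_congr Iio_ae_eq_Iic, gaussianReal_Iic_eq_ofReal_stdNormCDF]

lemma gpdf_add_mean (m d v x : ℝ) :
    gpdf (m + d) v x = gpdf m v x * Real.exp ((2 * d * (x - m) - d ^ 2) / (2 * v)) := by
  simp only [gpdf, mul_assoc, ← Real.exp_add]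
  congr 2
  ring

lemma prod_gpdf_add_mul {ι : Type*} [Fintype ι] (μ w y : ι → ℝ) (σ2 v : ℝ) :
    ∏ t, gpdf (μ t + v * w t) σ2 (y t) =
      (∏ t, gpdf (μ t) σ2 (y t)) *
        Real.exp ((2 * v * (∑ t, w t * (y t - μ t)) - v ^ 2 * ∑ t, w t ^ 2) / (2 * σ2)) := by
  simp only [gpdf_add_mean, Finset.prod_mul_distrib, ← Real.exp_sum]
  congr 2
  simp only [← Finset.sum_div, Finset.mul_sum, ← Finset.sum_sub_distrib]
  congr 1
  exact Finset.sum_congr rfl fun t _ => by ring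

lemma gpdf_mul_exp_eq_gpdf {σ2 τ η2 ν S W : ℝ} (hτ : 0 < τ) (hη2 : 0 < η2)
    (hη2_inv : η2⁻¹ = W / σ2 + (τ ^ 2)⁻¹) (hν : ν = η2 * S / σ2) (v : ℝ) :
    gpdf 0 (τ ^ 2) v * Real.exp ((2 * v * S - v ^ 2 * W) / (2 * σ2)) =
      Real.sqrt η2 / τ * Real.exp (ν ^ 2 / (2 * η2)) * gpdf ν η2 v := by
  have hconst : (Real.sqrt (2 * Real.pi * τ ^ 2))⁻¹ =
      Real.sqrt η2 / τ * (Real.sqrt (2 * Real.pi * η2))⁻¹ := by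
    rw [Real.sqrt_mul (by positivity) (τ ^ 2), Real.sqrt_mul (by positivity) η2,
      Real.sqrt_sq hτ.le]
    field_simp
  have hexp : -(v - 0) ^ 2 / (2 * τ ^ 2) + (2 * v * S - v ^ 2 * W) / (2 * σ2) =
      ν ^ 2 / (2 * η2) + -(v - ν) ^ 2 / (2 * η2) := by
    have hW : W / σ2 = η2⁻¹ - (τ ^ 2)⁻¹ := by rw [hη2_inv]; ring
    have hS : S / σ2 = ν / η2 := by rw [hν]; field_simp
    calc -(v - 0) ^ 2 / (2 * τ ^ 2) + (2 * v * S - v ^ 2 * W) / (2 * σ2)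
        = -v ^ 2 / (2 * τ ^ 2) + v * (S / σ2) - v ^ 2 / 2 * (W / σ2) := by ring
      _ = _ := by rw [hS, hW]; field_simp; ring
  calc gpdf 0 (τ ^ 2) v * Real.exp ((2 * v * S - v ^ 2 * W) / (2 * σ2))
      = (Real.sqrt (2 * Real.pi * τ ^ 2))⁻¹ *
          Real.exp (-(v - 0) ^ 2 / (2 * τ ^ 2) + (2 * v * S - v ^ 2 * W) / (2 * σ2)) := by
        rw [Real.exp_add, gpdf, mul_assoc]
    _ = Real.sqrt η2 / τ * (Real.sqrt (2 * Real.pi * η2))⁻¹ *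
          Real.exp (ν ^ 2 / (2 * η2) + -(v - ν) ^ 2 / (2 * η2)) := by
        rw [hconst, hexp]
    _ = _ := by
        rw [Real.exp_add, gpdf]
        ring

lemma gpdf_mul_likelihood {ι : Type*} [Fintype ι] (μ w y : ι → ℝ) {σ2 τ η2 ν : ℝ}
    (hτ : 0 < τ) (hη2 : 0 < η2) (hη2_inv : η2⁻¹ = (∑ t, w t ^ 2) / σ2 + (τ ^ 2)⁻¹)
    (hν : ν = η2 * (∑ t, w t * (y t - μ t)) / σ2) (v : ℝ) :
    gpdf 0 (τ ^ 2) v * ∏ t, gpdf (μ t + v * w t) σ2 (y t) =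
      (∏ t, gpdf (μ t) σ2 (y t)) * (Real.sqrt η2 / τ * Real.exp (ν ^ 2 / (2 * η2))) *
        gpdf ν η2 v := by
  rw [prod_gpdf_add_mul, mul_left_comm, gpdf_mul_exp_eq_gpdf hτ hη2 hη2_inv hν]
  ring

lemma halfNormal_withDensity {τ2 m v c : ℝ} {L : ℝ → ℝ} (hL : Measurable L) (hc : 0 ≤ c)
    (h : ∀ x, gpdf 0 τ2 x * L x = c * gpdf m v x) :
    (halfNormal τ2).withDensity (fun x => ENNReal.ofReal (L x)) =
      ENNReal.ofReal (2 * c) • (gaussianM m v).restrict (Set.Ioi 0) := by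
  have hdens : (Set.Ioi 0).indicator (fun x => ENNReal.ofReal (2 * gpdf 0 τ2 x)) *
        (fun x => ENNReal.ofReal (L x)) =
      (Set.Ioi 0).indicator (ENNReal.ofReal (2 * c) • fun x => ENNReal.ofReal (gpdf m v x)) := by
    funext x
    by_cases hx : x ∈ Set.Ioi 0
    · simp only [Pi.mul_apply, Set.indicator_of_mem hx, Pi.smul_apply, smul_eq_mul,
        ← ENNReal.ofReal_mul (mul_nonneg zero_le_two (gpdf_nonneg 0 τ2 x)),
        ← ENNReal.ofReal_mul (mul_nonneg zero_le_two hc), mul_assoc, h]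
    · simp only [Pi.mul_apply, Set.indicator_of_notMem hx, zero_mul]
  rw [halfNormal, ← withDensity_mul _ ((by fun_prop : Measurable _).indicator measurableSet_Ioi)
    (by fun_prop), hdens, withDensity_indicator measurableSet_Ioi,
    withDensity_smul _ (by fun_prop), ← restrict_withDensity measurableSet_Ioi]
  rfl

lemma mix_withDensity {E : Type*} [MeasurableSpace E] [MeasurableSingletonClass E] (p : ℝ)
    (μ : Measure E) (z : E) (f : E → ℝ≥0∞) :
    (mix p μ z).withDensity f =
      ENNReal.ofReal (1 - p) • μ.withDensity f + (ENNReal.ofReal p * f z) • Measure.dirac z := by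
  rw [mix, withDensity_add_measure, withDensity_smul_measure, withDensity_smul_measure,
    dirac_withDensity, smul_smul]

lemma cond_eq_of_restrict_eq_smul {Ω : Type*} [MeasurableSpace Ω] {μ ν : Measure Ω} {s : Set Ω}
    {c : ℝ≥0∞} (hc0 : c ≠ 0) (hc : c ≠ ⊤) (h : μ.restrict s = c • ν.restrict s) :
    μ[|s] = ν[|s] := by
  have hμs : μ s = c * ν s := by
    rw [← Measure.restrict_apply_univ, h, Measure.smul_apply, Measure.restrict_apply_univ,
      smul_eq_mul]
  rw [ProbabilityTheory.cond, ProbabilityTheory.cond, hμs, h, smul_smul,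
    ENNReal.mul_inv (.inl hc0) (.inl hc), mul_right_comm, ENNReal.inv_mul_cancel hc0 hc, one_mul]

section SpikeSlab

variable {E : Type*} [MeasurableSpace E] {G : Measure E} {s : Set E} {z : E} {a b : ℝ≥0∞}

lemma spikeSlab_apply_univ :
    (a • G.restrict s + b • Measure.dirac z) Set.univ = a * G s + b := by
  simp

lemma normalized_spikeSlab_apply_atom [MeasurableSingletonClass E] (hz : z ∉ s) :
    (((a • G.restrict s + b • Measure.dirac z) Set.univ)⁻¹ •
      (a • G.restrict s + b • Measure.dirac z)) {z} = b / (a * G s + b) := by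
  simp [spikeSlab_apply_univ, Measure.restrict_apply, hz, ENNReal.div_eq_inv_mul]

lemma cond_normalized_spikeSlab (hs : MeasurableSet s) (hz : z ∉ s) (ha0 : a ≠ 0) (ha : a ≠ ⊤)
    (hGs : G s ≠ ⊤) (hb0 : b ≠ 0) (hb : b ≠ ⊤) :
    (((a • G.restrict s + b • Measure.dirac z) Set.univ)⁻¹ •
      (a • G.restrict s + b • Measure.dirac z))[|s] = G[|s] := by
  refine cond_eq_of_restrict_eq_smul (c := (a * G s + b)⁻¹ * a) ?_ ?_ ?_
  · simp [ha0, ENNReal.mul_ne_top ha hGs, hb]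
  · exact ENNReal.mul_ne_top (ENNReal.inv_ne_top.2 (by simp [hb0])) ha
  · rw [spikeSlab_apply_univ, Measure.restrict_smul, Measure.restrict_add, Measure.restrict_smul,
      Measure.restrict_smul, Measure.restrict_restrict hs, Set.inter_self,
      Measure.restrict_eq_zero.2 ((dirac_eq_zero_iff_not_mem hs).2 hz), smul_zero, add_zero,
      smul_smul]

end SpikeSlab

lemma mix_halfNormal_withDensity_likelihood {ι : Type*} [Fintype ι] (μ w y : ι → ℝ)
    {σ2 τ π1 η2 ν : ℝ} (hτ : 0 < τ) (hη2 : 0 < η2)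
    (hη2_inv : η2⁻¹ = (∑ t, w t ^ 2) / σ2 + (τ ^ 2)⁻¹)
    (hν : ν = η2 * (∑ t, w t * (y t - μ t)) / σ2) :
    ((mix π1 (halfNormal (τ ^ 2)) 0).withDensity fun v =>
        ENNReal.ofReal (∏ t, gpdf (μ t + v * w t) σ2 (y t))) =
      ENNReal.ofReal ((1 - π1) * (2 * ((∏ t, gpdf (μ t) σ2 (y t)) *
          (Real.sqrt η2 / τ * Real.exp (ν ^ 2 / (2 * η2)))))) •
          (gaussianM ν η2).restrict (Set.Ioi 0) +
        ENNReal.ofReal (π1 * ∏ t, gpdf (μ t) σ2 (y t)) • Measure.dirac 0 := by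
  have hl0 : 0 ≤ ∏ t, gpdf (μ t) σ2 (y t) := Finset.prod_nonneg fun t _ => gpdf_nonneg _ _ _
  rw [mix_withDensity, halfNormal_withDensity (by fun_prop) (by positivity)
      (gpdf_mul_likelihood μ w y hτ hη2 hη2_inv hν), smul_smul,
    ← ENNReal.ofReal_mul' (by positivity)]
  simp only [zero_mul, add_zero, ← ENNReal.ofReal_mul' hl0]

/-- **Conditional posterior of a scalar spike-and-slab scale** (step (b) of Algorithm 1).
In the model `y = μ + v w + u`, `u ~ N_T(0, σ² I_T)`, with prior
`v ~ (1-π₁) N⁺(0,τ²) + π₁ δ₀`, setting `η² = (w'w σ^{-2} + τ^{-2})^{-1}` and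
`ν = σ^{-2} η² w'(y - μ)`, the posterior puts mass
`π₁ / (π₁ + 2(1-π₁)(η/τ) e^{ν²/(2η²)} Φ(ν/η))` at zero, and conditionally on `{v > 0}` it is
the `N(ν, η²)` distribution truncated below at zero. -/
theorem spike_slab_scalar_posterior (T : ℕ) (μ w y : Fin T → ℝ) (σ2 τ π1 : ℝ)
    (hσ2 : 0 < σ2) (hτ : 0 < τ) (hπ1 : π1 ∈ Set.Ioo (0 : ℝ) 1)
    (η2 ν : ℝ)
    (hη2 : η2 = ((∑ t, w t ^ 2) / σ2 + (τ ^ 2)⁻¹)⁻¹)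
    (hν : ν = η2 * (∑ t, w t * (y t - μ t)) / σ2)
    (post : Measure ℝ)
    (hpost : post =
      ((((mix π1 (halfNormal (τ ^ 2)) 0).withDensity fun v =>
            ENNReal.ofReal (∏ t, gpdf (μ t + v * w t) σ2 (y t))) Set.univ)⁻¹ •
        ((mix π1 (halfNormal (τ ^ 2)) 0).withDensity fun v =>
            ENNReal.ofReal (∏ t, gpdf (μ t + v * w t) σ2 (y t))))) :
    post {0} =
      ENNReal.ofReal (π1 /
        (π1 + 2 * (1 - π1) * (Real.sqrt η2 / τ) * Real.exp (ν ^ 2 / (2 * η2)) *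
          stdNormCDF (ν / Real.sqrt η2))) ∧
    ProbabilityTheory.cond post (Set.Ioi 0) =
      ProbabilityTheory.cond (gaussianM ν η2) (Set.Ioi 0) := by
  obtain ⟨hπ0, hπ1⟩ := hπ1
  have hη2_pos : 0 < η2 := by
    have := Finset.sum_nonneg fun t (_ : t ∈ Finset.univ) => sq_nonneg (w t)
    rw [hη2]
    positivity
  subst hpost
  rw [mix_halfNormal_withDensity_likelihood μ w y hτ hη2_pos (by rw [hη2, inv_inv]) hν]
  set l0 := ∏ t, gpdf (μ t) σ2 (y t)
  have hl0 : 0 < l0 := Finset.prod_pos fun t _ => gpdf_pos _ hσ2 _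
  have hΦ := stdNormCDF_pos (ν / Real.sqrt η2)
  have hslab : 0 < (1 - π1) * (2 * (l0 * (Real.sqrt η2 / τ * Real.exp (ν ^ 2 / (2 * η2))))) := by
    have := sub_pos.2 hπ1
    positivity
  refine ⟨?_, cond_normalized_spikeSlab measurableSet_Ioi Set.self_notMem_Ioi
    (ENNReal.ofReal_pos.2 hslab).ne' ENNReal.ofReal_ne_top
    (by rw [gaussianM_Ioi_zero ν hη2_pos]; exact ENNReal.ofReal_ne_top)
    (ENNReal.ofReal_pos.2 (by positivity)).ne' ENNReal.ofReal_ne_top⟩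
  rw [normalized_spikeSlab_apply_atom Set.self_notMem_Ioi, gaussianM_Ioi_zero ν hη2_pos,
    ← ENNReal.ofReal_mul hslab.le, ← ENNReal.ofReal_add (by positivity) (by positivity),
    ← ENNReal.ofReal_div_of_pos (by positivity)]
  congr 1
  field_simp
  ring

end BSGS
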